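/- arXiv:1301.2712 — 3 statements merged into one kernel-verified Lean document; each statement's English description precedes it below -/
import Mathlib

section
/- Let $n \geq 3$ and suppose the characteristic of the algebraically closed field $k$ does not divide $n$. Two elements $u, u'$ of the centralizer $z_{sub}$ of the subregular nilpotent in $\mathfrak{sl}_n$, parametrized by $(a_1,\ldots,a_{n-1},b,c)$ and $(a_1',\ldots,a_{n-1}',b',c')$, commute if and only if all $2\times 2$ minors of the matrix $\begin{pmatrix} a_1 & a_1' \\ b & b' \\ c & c' \end{pmatrix}$ vanish. -/
/-- An element of the centralizer of the subregular nilpotent (Jordan type `[n-1,1]`)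
in `sl_n`, parametrized by `a 0 = a₁, …, a (n-2) = a_{n-1}`, `b`, `c`. -/
def centMat (k : Type*) [Field k] (n : ℕ) (a : ℕ → k) (b c : k) :
    Matrix (Fin n) (Fin n) k :=
  Matrix.of fun i j =>
    if i.val < n - 1 ∧ j.val < n - 1 then
      (if j.val ≤ i.val then a (i.val - j.val) else 0)
    else if i.val = n - 2 ∧ j.val = n - 1 then c
    else if i.val = n - 1 ∧ j.val = 0 then b
    else if i.val = n - 1 ∧ j.val = n - 1 then (1 - (n : k)) * a 0
    else 0

/-!
Write `n = m + 2`, so that the indices split into the Toeplitz block `Fin (m + 1)` and the last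
index. Lower-triangular Toeplitz matrices commute: both products have `(i, j)` entry
`∑_{j ≤ l ≤ i} a (i - l) a' (l - j)`, which is symmetric under `l ↦ i + j - l`. So in the
commutator `[u, u']` only the entries meeting the corners `b`, `c` and `(1 - n) a₁` survive, and a
direct computation shows that `[u, u']` is supported at the positions `(n-2, 0)`, `(n-2, n-1)`,
`(n-1, 0)`, with entries `-(b c' - b' c)`, `n (a₁ c' - a₁' c)` and `-n (a₁ b' - a₁' b)`. As
`n ≠ 0` in `k`, these vanish exactly when the three minors do.
-/

open Matrix

def lowerToeplitz {R : Type*} [Zero R] (r : ℕ) (a : ℕ → R) : Matrix (Fin r) (Fin r) R :=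
  Matrix.of fun i j => if j ≤ i then a (i - j) else 0

theorem lowerToeplitz_mul_comm {R : Type*} [CommSemiring R] (r : ℕ) (a a' : ℕ → R) :
    lowerToeplitz r a * lowerToeplitz r a' = lowerToeplitz r a' * lowerToeplitz r a := by
  ext ⟨i, hi⟩ ⟨j, hj⟩
  simp only [mul_apply, lowerToeplitz, of_apply, Fin.le_iff_val_le_val, ite_mul, zero_mul,
    mul_ite, mul_zero]
  rw [Fin.sum_univ_eq_sum_range
      (fun l => if j ≤ l then if l ≤ i then a (i - l) * a' (l - j) else 0 else 0),
    Fin.sum_univ_eq_sum_range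
      (fun l => if j ≤ l then if l ≤ i then a' (i - l) * a (l - j) else 0 else 0)]
  simp only [← ite_and, ← Finset.sum_filter]
  refine Finset.sum_nbij' (fun l => i + j - l) (fun l => i + j - l) ?_ ?_ ?_ ?_ ?_ <;>
    intro l hl <;> simp only [Finset.mem_range, Finset.mem_filter] at hl ⊢
  any_goals omega
  rw [show i - (i + j - l) = l - j by omega, show i + j - l - j = i - l by omega, mul_comm]

section

variable {k : Type*} [Field k] (m : ℕ) (a : ℕ → k) (b c : k)

theorem centMat_castSucc_castSucc (i j : Fin (m + 1)) :
    centMat k (m + 2) a b c i.castSucc j.castSucc = lowerToeplitz (m + 1) a i j := by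
  simp only [centMat, lowerToeplitz, of_apply, Fin.val_castSucc, Fin.le_iff_val_le_val]
  rw [if_pos (by omega)]

theorem centMat_castSucc_last (i : Fin (m + 1)) :
    centMat k (m + 2) a b c i.castSucc (Fin.last (m + 1)) = if i = Fin.last m then c else 0 := by
  have := i.isLt
  simp only [centMat, of_apply, show m + 2 - 1 = m + 1 from rfl, show m + 2 - 2 = m from rfl,
    Fin.val_castSucc, Fin.val_last, Fin.ext_iff, and_true]
  split_ifs <;> first | rfl | omega

theorem centMat_last_castSucc (j : Fin (m + 1)) :
    centMat k (m + 2) a b c (Fin.last (m + 1)) j.castSucc = if j = 0 then b else 0 := by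
  have := j.isLt
  simp only [centMat, of_apply, show m + 2 - 1 = m + 1 from rfl, show m + 2 - 2 = m from rfl,
    Fin.val_castSucc, Fin.val_last, Fin.ext_iff, Fin.val_zero, true_and]
  split_ifs <;> first | rfl | omega

theorem centMat_last_last :
    centMat k (m + 2) a b c (Fin.last (m + 1)) (Fin.last (m + 1)) =
      (1 - ((m + 2 : ℕ) : k)) * a 0 := by
  simp only [centMat, of_apply, show m + 2 - 1 = m + 1 from rfl, show m + 2 - 2 = m from rfl,
    Fin.val_last, lt_irrefl, and_false, and_true, ↓reduceIte]
  rw [if_neg (by omega), if_neg (by omega)]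

variable (a' : ℕ → k) (b' c' : k)

theorem centMat_mul_apply_castSucc_castSucc (i j : Fin (m + 1)) :
    (centMat k (m + 2) a b c * centMat k (m + 2) a' b' c') i.castSucc j.castSucc =
      (lowerToeplitz (m + 1) a * lowerToeplitz (m + 1) a') i j +
        if i = Fin.last m ∧ j = 0 then c * b' else 0 := by
  simp only [mul_apply, Fin.sum_univ_castSucc, centMat_castSucc_castSucc, centMat_castSucc_last,
    centMat_last_castSucc, ite_mul, mul_ite, zero_mul, mul_zero, ← ite_and, and_comm]

theorem centMat_mul_apply_castSucc_last (i : Fin (m + 1)) :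
    (centMat k (m + 2) a b c * centMat k (m + 2) a' b' c') i.castSucc (Fin.last (m + 1)) =
      if i = Fin.last m then a 0 * c' + c * ((1 - ((m + 2 : ℕ) : k)) * a' 0) else 0 := by
  simp only [mul_apply, Fin.sum_univ_castSucc, centMat_castSucc_castSucc, centMat_castSucc_last,
    centMat_last_last, mul_ite, mul_zero, Finset.sum_ite_eq', Finset.mem_univ, ↓reduceIte,
    lowerToeplitz, of_apply, Fin.last_le_iff]
  split_ifs with h
  · subst h; simp
  · simp

theorem centMat_mul_apply_last_castSucc (j : Fin (m + 1)) :
    (centMat k (m + 2) a b c * centMat k (m + 2) a' b' c') (Fin.last (m + 1)) j.castSucc =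
      if j = 0 then b * a' 0 + (1 - ((m + 2 : ℕ) : k)) * a 0 * b' else 0 := by
  simp only [mul_apply, Fin.sum_univ_castSucc, centMat_castSucc_castSucc, centMat_last_castSucc,
    centMat_last_last, ite_mul, zero_mul, Finset.sum_ite_eq', Finset.mem_univ, ↓reduceIte,
    lowerToeplitz, of_apply, Fin.le_zero_iff]
  split_ifs with h
  · subst h; simp
  · simp

theorem centMat_mul_apply_last_last (hm : m ≠ 0) :
    (centMat k (m + 2) a b c * centMat k (m + 2) a' b' c') (Fin.last (m + 1)) (Fin.last (m + 1)) =
      (1 - ((m + 2 : ℕ) : k)) * a 0 * ((1 - ((m + 2 : ℕ) : k)) * a' 0) := by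
  have h0 : Fin.last m ≠ 0 := by simpa [Fin.ext_iff] using hm
  simp only [mul_apply, Fin.sum_univ_castSucc, centMat_castSucc_last, centMat_last_castSucc,
    centMat_last_last, ite_mul, zero_mul, mul_ite, mul_zero, Finset.sum_ite_eq', Finset.mem_univ,
    ↓reduceIte, h0, zero_add]

theorem centMat_commutator (hm : m ≠ 0) :
    centMat k (m + 2) a b c * centMat k (m + 2) a' b' c' -
        centMat k (m + 2) a' b' c' * centMat k (m + 2) a b c =
      single (Fin.last m).castSucc 0 (-(b * c' - b' * c)) +
        single (Fin.last m).castSucc (Fin.last (m + 1))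
          (((m + 2 : ℕ) : k) * (a 0 * c' - a' 0 * c)) +
        single (Fin.last (m + 1)) 0 (-(((m + 2 : ℕ) : k) * (a 0 * b' - a' 0 * b))) := by
  ext i j
  induction i using Fin.lastCases <;> induction j using Fin.lastCases <;>
    simp only [Matrix.sub_apply, Matrix.add_apply, single_apply,
      centMat_mul_apply_castSucc_castSucc,
      centMat_mul_apply_castSucc_last, centMat_mul_apply_last_castSucc,
      centMat_mul_apply_last_last (hm := hm), lowerToeplitz_mul_comm, Fin.castSucc_inj,
      ← Fin.castSucc_zero, Fin.castSucc_ne_last, (Fin.castSucc_ne_last _).symm,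
      eq_comm (a := Fin.last m), eq_comm (a := (0 : Fin (m + 1))), and_true, and_false, false_and,
      true_and, ↓reduceIte] <;>
    (try split_ifs) <;> ring

end

theorem stmt2_general (k : Type*) [Field k] (n : ℕ) (hn : 3 ≤ n)
    (hchar : (n : k) ≠ 0)
    (a a' : ℕ → k) (b c b' c' : k) :
    centMat k n a b c * centMat k n a' b' c' =
      centMat k n a' b' c' * centMat k n a b c ↔
      (a 0 * b' - a' 0 * b = 0 ∧ a 0 * c' - a' 0 * c = 0 ∧ b * c' - b' * c = 0) := by
  obtain ⟨m, rfl⟩ : ∃ m, n = m + 2 := ⟨n - 2, by omega⟩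
  rw [← sub_eq_zero, centMat_commutator m a b c a' b' c' (by omega)]
  constructor
  · intro h
    have hb := congrFun₂ h (Fin.last m).castSucc 0
    have hc := congrFun₂ h (Fin.last m).castSucc (Fin.last (m + 1))
    have ha := congrFun₂ h (Fin.last (m + 1)) 0
    push_cast at hchar
    simp [hchar, (Fin.castSucc_ne_last _).symm] at ha hb hc
    exact ⟨ha, hc, by linear_combination -hb⟩
  · rintro ⟨ha, hc, hb⟩
    simp [ha, hb, hc]

/-- if `char k` does not divide `n`, two elements of the centralizer `z_sub`
commute iff all 2×2 minors of the 3×2 matrix `[[a₁,a₁'],[b,b'],[c,c']]` vanish. -/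
theorem stmt2 (k : Type*) [Field k] [IsAlgClosed k] (n : ℕ) (hn : 3 ≤ n)
    (hchar : (n : k) ≠ 0)
    (a a' : ℕ → k) (b c b' c' : k) :
    centMat k n a b c * centMat k n a' b' c' =
      centMat k n a' b' c' * centMat k n a b c ↔
      (a 0 * b' - a' 0 * b = 0 ∧ a 0 * c' - a' 0 * c = 0 ∧ b * c' - b' * c = 0) :=
  stmt2_general k n hn hchar a a' b c b' c'
end

section
/- Let $n \geq 3$ and suppose the characteristic of $k$ divides $n$. Two elements $u, u'$ of the centralizer $z_{sub}$ of the subregular nilpotent in $\mathfrak{sl}_n(k)$, parametrized by $(a_1,\ldots,a_{n-1},b,c)$ and $(a_1',\ldots,a_{n-1}',b',c')$, commute if and only if $cb' - c'b = 0$. -/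
open Matrix

theorem commute_add_add_iff {R : Type*} [Ring R] {p x p' x' : R} (hpp' : Commute p p')
    (hpx' : Commute p x') (hxp' : Commute x p') :
    Commute (p + x) (p' + x') ↔ Commute x x' := by
  refine ⟨fun h => ?_, fun h => (hpp'.add_right hpx').add_left (hxp'.add_right h)⟩
  simpa using (h.sub_right (hpp'.add_left hxp')).sub_left ((hpp'.add_right hpx').sub_right hpp')

theorem Commute.sum_smul_pow_left {R S : Type*} [CommSemiring R] [Semiring S] [Algebra R S]
    {x y : S} (h : Commute x y) (s : Finset ℕ) (a : ℕ → R) :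
    Commute (∑ l ∈ s, a l • x ^ l) y :=
  Commute.sum_left _ _ _ fun _ _ => (h.pow_left _).smul_left _

theorem commute_sum_smul_pow_add_iff {R S : Type*} [CommSemiring R] [Ring S] [Algebra R S]
    {x y y' : S} (hy : Commute x y) (hy' : Commute x y') (s : Finset ℕ) (a a' : ℕ → R) :
    Commute ((∑ l ∈ s, a l • x ^ l) + y) ((∑ l ∈ s, a' l • x ^ l) + y') ↔ Commute y y' :=
  commute_add_add_iff (((Commute.refl x).sum_smul_pow_left s a').symm.sum_smul_pow_left s a)
    (hy'.sum_smul_pow_left s a) (hy.sum_smul_pow_left s a').symm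

section Subregular

variable {k : Type*} [Field k] {m : ℕ}

def subregularNilpotent (k : Type*) [Field k] (m : ℕ) : Matrix (Fin (m + 2)) (Fin (m + 2)) k :=
  Matrix.of fun i j => if i.val = j.val + 1 ∧ i.val ≤ m then 1 else 0

theorem subregularNilpotent_apply (i j : Fin (m + 2)) :
    subregularNilpotent k m i j = if i.val = j.val + 1 ∧ i.val ≤ m then 1 else 0 :=
  rfl

theorem subregularNilpotent_pow_apply (l : ℕ) (i j : Fin (m + 2)) :
    (subregularNilpotent k m ^ l) i j =
      if i.val = j.val + l ∧ (i.val ≤ m ∨ l = 0) then 1 else 0 := by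
  induction l generalizing i with
  | zero => simp [one_apply, Fin.ext_iff, eq_comm]
  | succ l ih =>
    rw [pow_succ', mul_apply]
    simp only [subregularNilpotent_apply, ite_mul, one_mul, zero_mul]
    by_cases hi : 1 ≤ i.val ∧ i.val ≤ m
    · rw [Fintype.sum_eq_single ⟨i.val - 1, by omega⟩
        fun x hx => if_neg fun h => hx <| Fin.ext <| by simp only; omega,
        if_pos (by simp only; omega), ih]
      simp only
      congr 1
      apply propext
      omega
    · rw [Finset.sum_eq_zero fun x _ => if_neg (by omega), if_neg (by omega)]

theorem sum_smul_subregularNilpotent_pow_apply (a : ℕ → k) (i j : Fin (m + 2)) :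
    (∑ l ∈ Finset.range (m + 2), a l • subregularNilpotent k m ^ l) i j =
      if j.val ≤ i.val ∧ (i.val ≤ m ∨ i = j) then a (i.val - j.val) else 0 := by
  simp only [Matrix.sum_apply, Matrix.smul_apply, subregularNilpotent_pow_apply, smul_eq_mul,
    mul_ite, mul_one, mul_zero]
  rw [Finset.sum_eq_single (i.val - j.val) (fun l _ hl => if_neg (by omega))
    (fun h => (h (Finset.mem_range.2 (by omega))).elim)]
  congr 1
  simp only [Fin.ext_iff]
  apply propext
  omega

def offBlock (k : Type*) [Field k] (m : ℕ) (b c : k) : Matrix (Fin (m + 2)) (Fin (m + 2)) k :=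
  single (Fin.last (m + 1)) 0 b + single (Fin.last m).castSucc (Fin.last (m + 1)) c

theorem centMat_eq_sum_smul_pow_add (hchar : ((m + 2 : ℕ) : k) = 0) (a : ℕ → k) (b c : k) :
    centMat k (m + 2) a b c =
      (∑ l ∈ Finset.range (m + 2), a l • subregularNilpotent k m ^ l) + offBlock k m b c := by
  ext i j
  rw [Matrix.add_apply, sum_smul_subregularNilpotent_pow_apply, offBlock, Matrix.add_apply]
  simp only [centMat, of_apply, single_apply, Fin.ext_iff, Fin.val_last, Fin.val_castSucc,
    Fin.val_zero, hchar, sub_zero, one_mul]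
  split_ifs <;> first | (exfalso; omega) | simp [show i.val - j.val = 0 by omega] | simp

theorem subregularNilpotent_mul_offBlock (b c : k) :
    subregularNilpotent k m * offBlock k m b c = 0 := by
  ext i j
  simp only [offBlock, mul_apply, subregularNilpotent_apply, Matrix.add_apply, single_apply,
    Fin.ext_iff, Fin.val_last, Fin.val_zero, Fin.val_castSucc, mul_add, mul_ite, ite_mul, one_mul,
    zero_mul, mul_zero, Matrix.zero_apply]
  refine Finset.sum_eq_zero fun x _ => ?_
  split_ifs <;> first | omega | simp

theorem offBlock_mul_subregularNilpotent (b c : k) :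
    offBlock k m b c * subregularNilpotent k m = 0 := by
  ext i j
  simp only [offBlock, mul_apply, Matrix.add_apply, single_apply, Fin.ext_iff, Fin.val_last,
    Fin.val_zero, Fin.val_castSucc, subregularNilpotent_apply, mul_ite, mul_one, mul_zero,
    Matrix.zero_apply]
  refine Finset.sum_eq_zero fun x _ => ?_
  split_ifs <;> first | omega | simp

theorem commute_subregularNilpotent_offBlock (b c : k) :
    Commute (subregularNilpotent k m) (offBlock k m b c) :=
  (subregularNilpotent_mul_offBlock b c).trans (offBlock_mul_subregularNilpotent b c).symm

theorem offBlock_mul_offBlock (hm : m ≠ 0) (b c b' c' : k) :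
    offBlock k m b c * offBlock k m b' c' = single (Fin.last m).castSucc 0 (c * b') := by
  have h0 : (0 : Fin (m + 2)) ≠ (Fin.last m).castSucc := by simp [Fin.ext_iff, Ne.symm hm]
  have hl : Fin.last (m + 1) ≠ (Fin.last m).castSucc := by simp [Fin.ext_iff]
  have hl0 : (0 : Fin (m + 2)) ≠ Fin.last (m + 1) := Fin.last_pos.ne
  simp [offBlock, add_mul, mul_add, single_mul_single_of_ne _ _ _ _ h0,
    single_mul_single_of_ne _ _ _ _ hl, single_mul_single_of_ne _ _ _ _ hl0]

theorem commute_offBlock_iff (hm : m ≠ 0) (b c b' c' : k) :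
    Commute (offBlock k m b c) (offBlock k m b' c') ↔ c * b' - c' * b = 0 := by
  rw [sub_eq_zero, Commute, SemiconjBy, offBlock_mul_offBlock hm, offBlock_mul_offBlock hm]
  exact ⟨fun h => by simpa using congrFun (congrFun h (Fin.last m).castSucc) 0, congrArg _⟩

end Subregular

theorem stmt3_general (k : Type*) [Field k] (n : ℕ) (hn : 3 ≤ n)
    (hchar : (n : k) = 0)
    (a a' : ℕ → k) (b c b' c' : k) :
    centMat k n a b c * centMat k n a' b' c' =
      centMat k n a' b' c' * centMat k n a b c ↔
      c * b' - c' * b = 0 := by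
  obtain ⟨m, rfl⟩ : ∃ m, n = m + 2 := ⟨n - 2, by omega⟩
  rw [centMat_eq_sum_smul_pow_add hchar, centMat_eq_sum_smul_pow_add hchar]
  exact (commute_sum_smul_pow_add_iff (commute_subregularNilpotent_offBlock b c)
    (commute_subregularNilpotent_offBlock b' c') _ a a').trans
    (commute_offBlock_iff (by omega) b c b' c')

/-- if `char k` divides `n`, two elements of the centralizer `z_sub`
commute iff `cb' - c'b = 0`. -/
theorem stmt3 (k : Type*) [Field k] [IsAlgClosed k] (n : ℕ) (hn : 3 ≤ n)
    (hchar : (n : k) = 0)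
    (a a' : ℕ → k) (b c b' c' : k) :
    centMat k n a b c * centMat k n a' b' c' =
      centMat k n a' b' c' * centMat k n a b c ↔
      c * b' - c' * b = 0 :=
  stmt3_general k n hn hchar a a' b c b' c'
end

section
/- Let $X_{i,j,m}$ be the $3\times(i+j+m)$ staircase matrix of indeterminates as above (second row vanishing in the first $i$ columns, third row vanishing in the first $i+j$ columns). Then the rank-$\leq 1$ locus $V(I_2(X_{i,j,m}))$ decomposes as the union of three closed subsets: (1) the locus where the second and third rows are identically zero, (2) the locus where $x_1=\cdots=x_i=0$ and the third row is zero and the remaining $2\times(j+m)$ submatrix has rank $\leq 1$, and (3) the locus where $x_1=\cdots=x_{i+j}=0$, $y_1=\cdots=y_j=0$, and the remaining $3\times m$ submatrix has rank $\leq 1$. -/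
/-! If some entry `M r' c₀` of a rank-one matrix is nonzero, every column in which row `r'`
vanishes is zero. Applied to a nonzero entry of the third row (resp. of the second row when the
third row vanishes), the staircase shape forces the first `i + j` (resp. `i`) columns to vanish,
which gives the three components; conversely, a matrix whose nonzero entries lie in a submatrix
of rank at most one has rank at most one. -/

namespace Matrix

variable {m n R : Type*} [CommRing R] (M : Matrix m n R)

def minor2 (r r' : m) (c c' : n) : R := M r c * M r' c' - M r c' * M r' c

lemma minor2_self_rows (r : m) (c c' : n) : M.minor2 r r c c' = 0 := by
  unfold minor2; ring

lemma minor2_swap_rows (r r' : m) (c c' : n) : M.minor2 r' r c c' = M.minor2 r r' c' c := by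
  unfold minor2; ring

lemma col_eq_zero_of_minor2_eq_zero [NoZeroDivisors R] {r' : m} {c c₀ : n}
    (hmin : ∀ r, M.minor2 r r' c c₀ = 0) (h₀ : M r' c₀ ≠ 0) (hc : M r' c = 0) (r : m) :
    M r c = 0 := by
  have h := hmin r
  rw [minor2, hc, mul_zero, sub_zero] at h
  exact (mul_eq_zero.mp h).resolve_right h₀

lemma minor2_eq_zero_of_eq_zero_outside (P : m → Prop) (Q : n → Prop)
    (hrow : ∀ r, ¬ P r → ∀ c, M r c = 0) (hcol : ∀ c, ¬ Q c → ∀ r, M r c = 0)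
    (h : ∀ r r' c c', P r → P r' → Q c → Q c' → M.minor2 r r' c c' = 0)
    (r r' : m) (c c' : n) : M.minor2 r r' c c' = 0 := by
  by_cases hr : P r
  · by_cases hr' : P r'
    · by_cases hc : Q c
      · by_cases hc' : Q c'
        · exact h r r' c c' hr hr' hc hc'
        · simp [minor2, hcol c' hc']
      · simp [minor2, hcol c hc]
    · simp [minor2, hrow r' hr']
  · simp [minor2, hrow r hr]

end Matrix

open Matrix

/-- a `3 × (i+j+m)` staircase matrix (second row vanishing in the first `i`
columns, third row vanishing in the first `i+j` columns) has rank at most 1 (all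
`2 × 2` minors vanish) iff (1) the second and third rows vanish, or (2) the first `i`
entries of the first row vanish, the third row vanishes, and the remaining `2 × (j+m)`
submatrix has rank at most 1, or (3) the first `i+j` entries of the first two rows vanish
and the remaining `3 × m` submatrix has rank at most 1. -/
theorem stmt8 (k : Type*) [Field k] (i j m : ℕ)
    (M : Matrix (Fin 3) (Fin (i + j + m)) k)
    (h2 : ∀ c : Fin (i + j + m), c.val < i → M 1 c = 0)
    (h3 : ∀ c : Fin (i + j + m), c.val < i + j → M 2 c = 0) :
    (∀ (r r' : Fin 3) (c c' : Fin (i + j + m)),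
        M r c * M r' c' - M r c' * M r' c = 0) ↔
      ((∀ c, M 1 c = 0 ∧ M 2 c = 0) ∨
       ((∀ c : Fin (i + j + m), c.val < i → M 0 c = 0) ∧ (∀ c, M 2 c = 0) ∧
         (∀ c c' : Fin (i + j + m), i ≤ c.val → i ≤ c'.val →
           M 0 c * M 1 c' - M 0 c' * M 1 c = 0)) ∨
       ((∀ c : Fin (i + j + m), c.val < i + j → M 0 c = 0) ∧
        (∀ c : Fin (i + j + m), c.val < i + j → M 1 c = 0) ∧
         (∀ (r r' : Fin 3) (c c' : Fin (i + j + m)), i + j ≤ c.val → i + j ≤ c'.val →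
           M r c * M r' c' - M r c' * M r' c = 0))) := by
  constructor
  · intro hmin
    by_cases hrow2 : ∀ c, M 2 c = 0
    · by_cases hrow1 : ∀ c, M 1 c = 0
      · exact .inl fun c => ⟨hrow1 c, hrow2 c⟩
      obtain ⟨c₀, hc₀⟩ := not_forall.mp hrow1
      have hzero c (hc : c.val < i) :=
        col_eq_zero_of_minor2_eq_zero M (hmin · 1 c c₀) hc₀ (h2 c hc)
      exact .inr <| .inl ⟨(hzero · · 0), hrow2, fun c c' _ _ => hmin 0 1 c c'⟩
    obtain ⟨c₀, hc₀⟩ := not_forall.mp hrow2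
    have hzero c (hc : c.val < i + j) :=
      col_eq_zero_of_minor2_eq_zero M (hmin · 2 c c₀) hc₀ (h3 c hc)
    exact .inr <| .inr ⟨(hzero · · 0), (hzero · · 1), fun r r' c c' _ _ => hmin r r' c c'⟩
  · rintro (hrows | ⟨hrow0, hrow2, hsub⟩ | ⟨hrow0, hrow1, hsub⟩)
    · refine minor2_eq_zero_of_eq_zero_outside M (· = 0) (fun _ => True) ?_ (by simp) ?_
      · intro r hr c
        fin_cases r <;> simp_all
      · rintro r r' c c' rfl rfl - -
        exact minor2_self_rows M 0 c c'
    · refine minor2_eq_zero_of_eq_zero_outside M (· ≠ 2) (fun c => i ≤ c.val)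
        (fun r hr c => by simp_all) ?_ ?_
      · intro c hc r
        fin_cases r <;> simp_all
      · intro r r' c c' hr hr' hc hc'
        fin_cases r <;> fin_cases r' <;> first
          | exact minor2_self_rows M _ c c' | exact hsub c c' hc hc'
          | (rw [minor2_swap_rows]; exact hsub c' c hc' hc) | simp at hr hr'
    · refine minor2_eq_zero_of_eq_zero_outside M (fun _ => True) (fun c => i + j ≤ c.val)
        (by simp) ?_ fun r r' c c' _ _ hc hc' => hsub r r' c c' hc hc'
      intro c hc r
      fin_cases r <;> simp_all
end
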